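/- arXiv:1204.4440 — 4 statements merged into one kernel-verified Lean document; each statement's English description precedes it below -/
import Mathlib

section
/- Let φ = (φ_λ)_{λ∈Λ} be a sampling net in X with associated net of empirical measures p_φ^{(λ)} and regularity P_φ (the set of weak-* limit points of this net). Then for every m ∈ ℕ and every bounded map γ : X → ℝ^m, the set of limit points in ℝ^m of the net y_λ = (1/n_λ)·Σ_{i=1}^{n_λ} γ(φ_{λi}) equals P_φ(γ) = { (p(γ_1),...,p(γ_m)) : p ∈ P_φ }. -/
open BoundedContinuousFunction Filter Topology

noncomputable def PF (X : Type*) [TopologicalSpace X] [DiscreteTopology X] :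
    Set (WeakDual ℝ (X →ᵇ ℝ)) :=
  {p | (∀ f : X →ᵇ ℝ, (∀ x, 0 ≤ f x) → 0 ≤ p f) ∧ p 1 = 1}

noncomputable def emp {X : Type*} [TopologicalSpace X] [DiscreteTopology X]
    {n : ℕ} (v : Fin n → X) : WeakDual ℝ (X →ᵇ ℝ) :=
  ((n : ℝ)⁻¹ • ∑ i, (evalCLM ℝ (v i) : (X →ᵇ ℝ) →L[ℝ] ℝ) : (X →ᵇ ℝ) →L[ℝ] ℝ)

lemma emp_apply {X : Type*} [TopologicalSpace X] [DiscreteTopology X]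
    {n : ℕ} (v : Fin n → X) (f : X →ᵇ ℝ) :
    emp v f = (n : ℝ)⁻¹ * ∑ i, f (v i) := by
  show (((n : ℝ)⁻¹ • ∑ i, evalCLM ℝ (v i) : (X →ᵇ ℝ) →L[ℝ] ℝ)) f = _
  simp [ContinuousLinearMap.smul_apply, ContinuousLinearMap.sum_apply, evalCLM_apply,
    smul_eq_mul]

lemma emp_norm_le {X : Type*} [TopologicalSpace X] [DiscreteTopology X]
    {n : ℕ} (v : Fin n → X) :
    ‖WeakDual.toStrongDual (emp v)‖ ≤ 1 := by
  refine ContinuousLinearMap.opNorm_le_bound _ zero_le_one fun f => ?_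
  have h : WeakDual.toStrongDual (emp v) f = (n : ℝ)⁻¹ * ∑ i, f (v i) := emp_apply v f
  rw [h]
  have h1 : |∑ i, f (v i)| ≤ (n : ℝ) * ‖f‖ := by
    calc |∑ i, f (v i)| ≤ ∑ i : Fin n, |f (v i)| := Finset.abs_sum_le_sum_abs _ _
      _ ≤ ∑ _i : Fin n, ‖f‖ := Finset.sum_le_sum fun i _ => f.norm_coe_le_norm (v i)
      _ = (n : ℝ) * ‖f‖ := by simp [mul_comm]
  have h2 : (n : ℝ)⁻¹ * (n : ℝ) ≤ 1 := by
    rcases Nat.eq_zero_or_pos n with h | h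
    · simp [h]
    · rw [inv_mul_cancel₀ (by exact_mod_cast h.ne' : (n:ℝ) ≠ 0)]
  calc ‖(n : ℝ)⁻¹ * ∑ i, f (v i)‖ = (n : ℝ)⁻¹ * |∑ i, f (v i)| := by
        rw [Real.norm_eq_abs, abs_mul, abs_inv, Nat.abs_cast]
    _ ≤ (n : ℝ)⁻¹ * ((n : ℝ) * ‖f‖) :=
        mul_le_mul_of_nonneg_left h1 (by positivity)
    _ = ((n : ℝ)⁻¹ * (n : ℝ)) * ‖f‖ := by ring
    _ ≤ 1 * ‖f‖ := mul_le_mul_of_nonneg_right h2 (norm_nonneg f)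

theorem limitPoints_of_averages_eq_image_of_regularity
    {X : Type*} [TopologicalSpace X] [DiscreteTopology X]
    {Λ : Type*} [Preorder Λ] [Nonempty Λ] [IsDirected Λ (· ≤ ·)]
    (nl : Λ → ℕ) (hn : ∀ l, 0 < nl l) (φ : ∀ l : Λ, Fin (nl l) → X)
    (m : ℕ) (γ : Fin m → (X →ᵇ ℝ)) :
    {r : Fin m → ℝ |
        MapClusterPt r atTop fun l : Λ => fun j => (nl l : ℝ)⁻¹ * ∑ i, γ j (φ l i)} =
      {r : Fin m → ℝ |
        ∃ p ∈ {p : WeakDual ℝ (X →ᵇ ℝ) | MapClusterPt p atTop fun l : Λ => emp (φ l)},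
          ∀ j, p (γ j) = r j} := by
  ext r
  simp only [Set.mem_setOf_eq]
  constructor
  · intro hr
    rw [mapClusterPt_iff_ultrafilter] at hr
    obtain ⟨U, hU, hUr⟩ := hr
    -- the empirical functionals live in the unit ball, compact by Banach-Alaoglu
    have hK : IsCompact (WeakDual.toStrongDual ⁻¹'
        Metric.closedBall (0 : StrongDual ℝ (X →ᵇ ℝ)) 1) :=
      WeakDual.isCompact_closedBall (𝕜 := ℝ) 0 1
    have hmem : ∀ l, emp (φ l) ∈ WeakDual.toStrongDual ⁻¹'
        Metric.closedBall (0 : StrongDual ℝ (X →ᵇ ℝ)) 1 := by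
      intro l
      simp only [Set.mem_preimage, Metric.mem_closedBall, dist_zero_right]
      exact (dist_zero_right (WeakDual.toStrongDual (emp (φ l)) : StrongDual ℝ (X →ᵇ ℝ))).trans_le
        (emp_norm_le (φ l))
    obtain ⟨p, _, hp⟩ := hK.ultrafilter_le_nhds (U.map fun l => emp (φ l))
      (by
        rw [Ultrafilter.coe_map, Filter.le_principal_iff]
        exact Filter.mem_map.2 (Filter.univ_mem' hmem))
    have htend : Tendsto (fun l => emp (φ l)) U (𝓝 p) := hp
    refine ⟨p, ?_, ?_⟩
    · exact mapClusterPt_iff_ultrafilter.2 ⟨U, hU, htend⟩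
    · intro j
      have h1 : Tendsto (fun l => emp (φ l) (γ j)) U (𝓝 (p (γ j))) :=
        ((WeakDual.eval_continuous (γ j)).tendsto p).comp htend
      have h2 : Tendsto (fun l => emp (φ l) (γ j)) U (𝓝 (r j)) := by
        have : Tendsto (fun l : Λ => (fun j => (nl l : ℝ)⁻¹ * ∑ i, γ j (φ l i)) j) U
            (𝓝 (r j)) := ((continuous_apply j).tendsto r).comp hUr
        simpa [emp_apply] using this
      exact tendsto_nhds_unique h1 h2
  · rintro ⟨p, hp, hpr⟩
    have hcont : Continuous fun q : WeakDual ℝ (X →ᵇ ℝ) => fun j => q (γ j) :=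
      continuous_pi fun j => WeakDual.eval_continuous (γ j)
    have := hp.continuousAt_comp (hcont.continuousAt (x := p))
    have heq : ((fun q : WeakDual ℝ (X →ᵇ ℝ) => fun j => q (γ j)) ∘
        fun l : Λ => emp (φ l)) = fun l : Λ => fun j => (nl l : ℝ)⁻¹ * ∑ i, γ j (φ l i) := by
      funext l j; exact emp_apply (φ l) (γ j)
    rw [heq] at this
    have hr : (fun j => p (γ j)) = r := funext hpr
    rwa [hr] at this
end

section
/- If P₁ and P₂ are two distinct nonempty closed subsets of PF(X), then there exist m ∈ ℕ and bounded functions γ₁, ..., γ_m : X → ℝ such that the image sets P₁(γ) and P₂(γ) in ℝ^m are distinct, where P(γ) = { (p(γ₁),...,p(γ_m)) : p ∈ P }. -/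
open BoundedContinuousFunction Filter Topology

theorem distinct_closed_sets_separated_by_finite_evaluations
    {X : Type*} [TopologicalSpace X] [DiscreteTopology X]
    (P₁ P₂ : Set (WeakDual ℝ (X →ᵇ ℝ)))
    (h₁c : IsClosed P₁) (h₂c : IsClosed P₂)
    (h₁n : P₁.Nonempty) (h₂n : P₂.Nonempty)
    (h₁ : P₁ ⊆ PF X) (h₂ : P₂ ⊆ PF X) (hne : P₁ ≠ P₂) :
    ∃ (m : ℕ) (γ : Fin m → (X →ᵇ ℝ)),
      (fun p : WeakDual ℝ (X →ᵇ ℝ) => fun j => p (γ j)) '' P₁ ≠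
        (fun p : WeakDual ℝ (X →ᵇ ℝ) => fun j => p (γ j)) '' P₂ := by
  by_contra hcon
  push_neg at hcon
  apply hne
  have key : ∀ (P Q : Set (WeakDual ℝ (X →ᵇ ℝ))), IsClosed Q →
      (∀ (m : ℕ) (γ : Fin m → (X →ᵇ ℝ)),
        (fun p : WeakDual ℝ (X →ᵇ ℝ) => fun j => p (γ j)) '' P =
        (fun p : WeakDual ℝ (X →ᵇ ℝ) => fun j => p (γ j)) '' Q) → P ⊆ Q := by
    intro P Q hQ hPQ p hp
    rw [← hQ.closure_eq]
    have hind : IsInducing (fun (q : WeakDual ℝ (X →ᵇ ℝ)) (f : X →ᵇ ℝ) => q f) :=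
      (WeakBilin.isEmbedding ContinuousLinearMap.coe_injective).toIsInducing
    rw [hind.closure_eq_preimage_closure_image, Set.mem_preimage, mem_closure_iff]
    intro U hU hpU
    obtain ⟨I, u, hu, hsub⟩ := isOpen_pi_iff.mp hU _ hpU
    let e := I.equivFin
    set m := I.card with hm
    let γ : Fin m → (X →ᵇ ℝ) := fun j => (e.symm j : X →ᵇ ℝ)
    have hmem : (fun j => p (γ j)) ∈
        (fun q : WeakDual ℝ (X →ᵇ ℝ) => fun j => q (γ j)) '' Q := by
      rw [← hPQ m γ]; exact ⟨p, hp, rfl⟩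
    obtain ⟨q, hq, hqe⟩ := hmem
    refine ⟨fun f => q f, hsub ?_, ⟨q, hq, rfl⟩⟩
    intro f hf
    have hqf : q f = p f := by
      have h1 := congrFun hqe (e ⟨f, hf⟩)
      simpa [γ] using h1
    simpa [hqf] using (hu f hf).2
  exact (key P₁ P₂ h₂c hcon).antisymm (key P₂ P₁ h₁c fun m γ => (hcon m γ).symm)
end

section
/- The set Q of finitely supported rational-valued finitely additive probabilities — i.e., functionals of the form p(f) = Σ_{x ∈ F} q_x f(x) with F ⊆ X finite, q_x ∈ ℚ, q_x ≥ 0, Σ q_x = 1 — is dense in PF(X) in the weak-* topology. -/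
open BoundedContinuousFunction Filter Topology

/-- Finitely supported finitely additive probabilities with rational weights. -/
def ratQ (X : Type*) [TopologicalSpace X] [DiscreteTopology X] :
    Set (WeakDual ℝ (X →ᵇ ℝ)) :=
  {p | ∃ (F : Finset X) (q : X → ℚ), (∀ x, 0 ≤ q x) ∧ (∑ x ∈ F, (q x : ℝ)) = 1 ∧
    ∀ f : X →ᵇ ℝ, p f = ∑ x ∈ F, (q x : ℝ) * f x}

lemma ratApprox {ι : Type*} (t : Finset ι) (w : ι → ℝ)
    (h0 : ∀ i ∈ t, 0 ≤ w i) (h1 : ∑ i ∈ t, w i = 1) {δ : ℝ} (hδ : 0 < δ) :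
    ∃ q : ι → ℚ, (∀ i, 0 ≤ q i) ∧ (∑ i ∈ t, ((q i : ℝ))) = 1 ∧
      ∀ i ∈ t, |(q i : ℝ) - w i| ≤ δ := by
  classical
  have ht : t.Nonempty := by
    rcases t.eq_empty_or_nonempty with h | h
    · simp [h] at h1
    · exact h
  obtain ⟨i₀, hi₀⟩ := ht
  set δ' : ℝ := δ / (t.card + 1) with hδ'def
  have hcard : (0:ℝ) < t.card + 1 := by positivity
  have hδ'pos : 0 < δ' := by positivity
  have hex : ∀ i ∈ t, ∃ r : ℚ, 0 ≤ r ∧ (r : ℝ) ≤ w i ∧ w i - (r : ℝ) ≤ δ' := by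
    intro i hi
    by_cases hw : w i ≤ δ'
    · exact ⟨0, le_refl _, by simpa using h0 i hi, by simpa using hw⟩
    · push_neg at hw
      obtain ⟨r, hr1, hr2⟩ := exists_rat_btwn (show w i - δ' < w i by linarith)
      exact ⟨r, by have : (0:ℝ) ≤ r := by linarith
                   exact_mod_cast this,
             le_of_lt hr2, by linarith⟩
  choose! r hr0 hr1 hr2 using hex
  have hsumr_le : ∑ i ∈ t, (r i : ℝ) ≤ 1 := by
    rw [← h1]; exact Finset.sum_le_sum (fun i hi => hr1 i hi)
  set d : ℚ := 1 - ∑ i ∈ t, r i with hd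
  have hd0 : 0 ≤ d := by
    have : ((∑ i ∈ t, r i : ℚ) : ℝ) ≤ 1 := by push_cast; exact hsumr_le
    have : (∑ i ∈ t, r i : ℚ) ≤ 1 := by exact_mod_cast this
    simp [hd]; linarith
  have hdle : (d : ℝ) ≤ t.card * δ' := by
    have : (1:ℝ) - ∑ i ∈ t, (r i : ℝ) ≤ ∑ i ∈ t, δ' := by
      rw [← h1, ← Finset.sum_sub_distrib]
      exact Finset.sum_le_sum (fun i hi => hr2 i hi)
    push_cast [hd]
    simpa [Finset.sum_const, nsmul_eq_mul] using this
  refine ⟨fun i => if i ∈ t then r i + (if i = i₀ then d else 0) else 0, ?_, ?_, ?_⟩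
  · intro i
    by_cases hi : i ∈ t
    · simp only [hi, if_true]
      have := hr0 i hi
      split <;> linarith
    · simp [hi]
  · have : ∑ i ∈ t, ((if i ∈ t then r i + (if i = i₀ then d else 0) else 0 : ℚ) : ℝ)
        = ∑ i ∈ t, ((r i : ℝ) + (if i = i₀ then (d:ℝ) else 0)) := by
      refine Finset.sum_congr rfl (fun i hi => ?_)
      rw [if_pos hi]
      push_cast [apply_ite (fun q : ℚ => (q : ℝ))]
      ring_nf
    rw [this, Finset.sum_add_distrib, Finset.sum_ite_eq' t i₀ (fun _ => (d:ℝ))]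
    rw [if_pos hi₀, hd]
    push_cast
    ring
  · intro i hi
    simp only [hi, if_true]
    have h2 := hr2 i hi
    have h1' := hr1 i hi
    have hdl : (0:ℝ) ≤ d := by exact_mod_cast hd0
    have hcd : (t.card : ℝ) * δ' + δ' ≤ δ := by
      have : ((t.card : ℝ) + 1) * δ' = δ := by
        rw [hδ'def]; field_simp
      nlinarith [this]
    by_cases h : i = i₀
    · subst h
      rw [if_pos rfl]
      push_cast
      rw [abs_le]
      constructor <;> nlinarith [hdle]
    · simp [h]
      rw [abs_le]
      constructor <;> nlinarith [hdle]

lemma barycenter_mem {X : Type*} [TopologicalSpace X] [DiscreteTopology X] [Nonempty X]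
    (p : WeakDual ℝ (X →ᵇ ℝ)) (hp : p ∈ PF X) (s : Finset (X →ᵇ ℝ)) :
    (fun i : s => p (i : X →ᵇ ℝ)) ∈
      closure (convexHull ℝ (Set.range (fun x : X => fun i : s => (i : X →ᵇ ℝ) x))) := by
  classical
  set v : X → (s → ℝ) := fun x i => (i : X →ᵇ ℝ) x with hv
  set Φ : s → ℝ := fun i => p (i : X →ᵇ ℝ) with hΦ
  by_contra hc
  obtain ⟨F, u, hFu, hub⟩ := geometric_hahn_banach_point_closed
    ((convex_convexHull ℝ (Set.range v)).closure) isClosed_closure hc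
  set c : s → ℝ := fun i => F (Pi.single i 1 : s → ℝ) with hc'
  have hF : ∀ y : s → ℝ, F y = ∑ i, y i * c i := by
    intro y
    have hy : y = ∑ i, y i • (Pi.single i 1 : s → ℝ) := by
      funext j
      simp [Finset.sum_apply, Pi.single_apply, mul_ite]
    conv_lhs => rw [hy]
    rw [map_sum]
    refine Finset.sum_congr rfl (fun i _ => ?_)
    rw [map_smul]
    simp [hc', smul_eq_mul]
  set g : X →ᵇ ℝ := ∑ i, c i • (i : X →ᵇ ℝ) with hg
  have hgx : ∀ x, g x = F (v x) := by
    intro x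
    rw [hF]
    simp only [hg, hv]
    rw [BoundedContinuousFunction.coe_sum]
    simp [Finset.sum_apply, mul_comm]
  have h1 : ∀ x, u < g x := by
    intro x
    rw [hgx]
    exact hub (v x) (subset_closure (subset_convexHull ℝ _ (Set.mem_range_self x)))
  have h2 : p g = F Φ := by
    rw [hF, hg, map_sum]
    refine Finset.sum_congr rfl (fun i _ => ?_)
    rw [map_smul]
    simp [hΦ, smul_eq_mul, mul_comm]
  have h3 : 0 ≤ p (g + (-u) • (1 : X →ᵇ ℝ)) := by
    refine hp.1 _ (fun x => ?_)
    have := h1 x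
    simp only [BoundedContinuousFunction.coe_add, BoundedContinuousFunction.coe_smul,
      Pi.add_apply, Pi.smul_apply, BoundedContinuousFunction.coe_one, Pi.one_apply,
      smul_eq_mul, mul_one]
    linarith
  rw [map_add, map_smul, hp.2, h2] at h3
  simp only [smul_eq_mul, mul_one] at h3
  linarith

lemma exists_ratQ_close {X : Type*} [TopologicalSpace X] [DiscreteTopology X] [Nonempty X]
    (p : WeakDual ℝ (X →ᵇ ℝ)) (hp : p ∈ PF X) (s : Finset (X →ᵇ ℝ)) {ε : ℝ} (hε : 0 < ε) :
    ∃ P ∈ ratQ X, ∀ f ∈ s, |P f - p f| < ε := by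
  classical
  set v : X → (s → ℝ) := fun x i => (i : X →ᵇ ℝ) x with hv
  set Φ : s → ℝ := fun i => p (i : X →ᵇ ℝ) with hΦ
  have hΦmem := barycenter_mem p hp s
  obtain ⟨b, hbK, hbd⟩ := Metric.mem_closure_iff.mp hΦmem (ε/2) (by positivity)
  rw [convexHull_eq] at hbK
  obtain ⟨ι', t, w, z, hw0, hw1, hz, hbc⟩ := hbK
  have hzx : ∀ i ∈ t, ∃ x : X, v x = z i := fun i hi => hz i hi
  choose! xp hxp using hzx
  have htne : t.Nonempty := by
    rcases t.eq_empty_or_nonempty with h | h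
    · simp [h] at hw1
    · exact h
  have htc : 0 < (t.card : ℝ) := by exact_mod_cast Finset.card_pos.mpr htne
  set M : ℝ := 1 + ∑ f ∈ s, ‖f‖ with hM
  have hM1 : (1:ℝ) ≤ M := by
    have : (0:ℝ) ≤ ∑ f ∈ s, ‖f‖ := Finset.sum_nonneg (fun g _ => norm_nonneg g)
    simp [hM]; linarith
  have hM0 : (0:ℝ) < M := by linarith
  have hMf : ∀ f ∈ s, ‖f‖ ≤ M := by
    intro f hf
    have := Finset.single_le_sum (f := fun g : X →ᵇ ℝ => ‖g‖) (fun g _ => norm_nonneg g) hf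
    simp only [hM]; linarith
  set δ : ℝ := ε / (2 * M * t.card) with hδdef
  have hδ0 : 0 < δ := by positivity
  obtain ⟨q, hq0, hq1, hqw⟩ := ratApprox t w hw0 hw1 hδ0
  set F : Finset X := t.image xp with hFdef
  set qX : X → ℚ := fun y => ∑ i ∈ t.filter (fun i => xp i = y), q i with hqX
  set P : WeakDual ℝ (X →ᵇ ℝ) :=
    (∑ y ∈ F, (qX y : ℝ) • (evalCLM ℝ y : (X →ᵇ ℝ) →L[ℝ] ℝ) : (X →ᵇ ℝ) →L[ℝ] ℝ) with hP
  have hPapp : ∀ f : X →ᵇ ℝ, P f = ∑ y ∈ F, (qX y : ℝ) * f y := by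
    intro f
    show (∑ y ∈ F, (qX y : ℝ) • (evalCLM ℝ y : (X →ᵇ ℝ) →L[ℝ] ℝ)) f = _
    rw [ContinuousLinearMap.sum_apply]
    refine Finset.sum_congr rfl (fun y _ => ?_)
    rfl
  have hfib : ∀ (g : ι' → ℝ),
      ∑ y ∈ F, ∑ i ∈ t.filter (fun i => xp i = y), g i = ∑ i ∈ t, g i := by
    intro g
    exact Finset.sum_fiberwise_of_maps_to (fun i hi => Finset.mem_image_of_mem xp hi) g
  have hsum1 : ∑ y ∈ F, ((qX y : ℝ)) = 1 := by
    have e1 : ∑ y ∈ F, ((qX y:ℝ)) = ∑ y ∈ F, ∑ i ∈ t.filter (fun i => xp i = y), ((q i:ℝ)) := by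
      refine Finset.sum_congr rfl (fun y _ => ?_)
      simp [hqX]
    rw [e1, hfib, hq1]
  have hPmem : P ∈ ratQ X :=
    ⟨F, qX, fun y => Finset.sum_nonneg (fun i _ => hq0 i), hsum1, hPapp⟩
  refine ⟨P, hPmem, fun f hf => ?_⟩
  set i₀ : s := ⟨f, hf⟩ with hi₀
  have hPf : P f = ∑ i ∈ t, (q i : ℝ) * f (xp i) := by
    rw [hPapp, ← hfib (fun i => (q i : ℝ) * f (xp i))]
    refine Finset.sum_congr rfl (fun y hy => ?_)
    have e2 : (qX y : ℝ) * f y = ∑ i ∈ t.filter (fun i => xp i = y), (q i : ℝ) * f y := by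
      rw [hqX]; push_cast; rw [Finset.sum_mul]
    rw [e2]
    refine Finset.sum_congr rfl (fun i hi => ?_)
    rw [(Finset.mem_filter.mp hi).2]
  have hbf : b i₀ = ∑ i ∈ t, w i * f (xp i) := by
    rw [← hbc, Finset.centerMass_eq_of_sum_1 _ _ hw1, Finset.sum_apply]
    refine Finset.sum_congr rfl (fun i hi => ?_)
    rw [← hxp i hi]
    simp [hv, i₀]
  have hΦf : Φ i₀ = p f := rfl
  have h2 : |b i₀ - p f| < ε/2 := by
    have hd1 : dist (Φ i₀) (b i₀) ≤ dist Φ b := dist_le_pi_dist Φ b i₀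
    rw [Real.dist_eq] at hd1
    have : |b i₀ - p f| = |Φ i₀ - b i₀| := by rw [hΦf, abs_sub_comm]
    rw [this]
    exact lt_of_le_of_lt hd1 hbd
  have h1 : |P f - b i₀| ≤ ε/2 := by
    rw [hPf, hbf, ← Finset.sum_sub_distrib]
    calc |∑ i ∈ t, ((q i:ℝ) * f (xp i) - w i * f (xp i))|
        ≤ ∑ i ∈ t, |(q i:ℝ) * f (xp i) - w i * f (xp i)| := Finset.abs_sum_le_sum_abs _ _
      _ ≤ ∑ i ∈ t, δ * M := by
          refine Finset.sum_le_sum (fun i hi => ?_)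
          rw [← sub_mul, abs_mul]
          exact mul_le_mul (hqw i hi) ((f.norm_coe_le_norm (xp i)).trans (hMf f hf))
            (abs_nonneg _) hδ0.le
      _ = t.card * (δ * M) := by rw [Finset.sum_const, nsmul_eq_mul]
      _ ≤ ε/2 := by
          rw [hδdef]
          rw [show (t.card : ℝ) * (ε / (2 * M * t.card) * M) = ε/2 * (t.card * M / (t.card * M))
            by field_simp]
          rw [div_self (by positivity), mul_one]
  calc |P f - p f| ≤ |P f - b i₀| + |b i₀ - p f| := abs_sub_le _ _ _
    _ < ε/2 + ε/2 := by
        rcases lt_or_eq_of_le h1 with h | h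
        · exact add_lt_add h h2
        · rw [h]; exact add_lt_add_right h2 _
    _ = ε := by ring

theorem ratQ_dense_in_PF (X : Type*) [TopologicalSpace X] [DiscreteTopology X] [Nonempty X] :
    ∀ p ∈ PF X, p ∈ closure (ratQ X) := by
  intro p hp
  rw [mem_closure_iff]
  intro o ho hpo
  obtain ⟨O, hO, rfl⟩ := isOpen_induced_iff.mp ho
  have hpO : (fun f : X →ᵇ ℝ => p f) ∈ O := hpo
  obtain ⟨I, u, hIu, hsub⟩ := isOpen_pi_iff.mp hO _ hpO
  have hball : ∀ f ∈ I, ∃ εf > 0, Metric.ball (p f) εf ⊆ u f := by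
    intro f hf
    exact Metric.isOpen_iff.mp (hIu f hf).1 _ (hIu f hf).2
  choose! εf hεf0 hεfsub using hball
  obtain ⟨ε, hε0, hεle⟩ : ∃ ε > 0, ∀ f ∈ I, ε ≤ εf f := by
    rcases I.eq_empty_or_nonempty with h | h
    · exact ⟨1, one_pos, by simp [h]⟩
    · refine ⟨I.inf' h εf, ?_, fun f hf => Finset.inf'_le εf hf⟩
      exact (Finset.lt_inf'_iff h).mpr (fun f hf => hεf0 f hf)
  obtain ⟨P, hPmem, hPclose⟩ := exists_ratQ_close p hp I hε0
  refine ⟨P, ?_, hPmem⟩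
  apply hsub
  intro f hf
  apply hεfsub f hf
  rw [Metric.mem_ball, Real.dist_eq]
  exact lt_of_lt_of_le (hPclose f hf) (hεle f hf)
end

section
/- Let x = (x_n) be a sequence in X and let p_n denote the empirical functionals p_n(f) = (1/n)·Σ_{i=1}^n f(x_i). Then the net (p_n) converges weak-* to some p₀ ∈ PF(X) if and only if p_n(f) converges for every bounded f : X → ℝ, and in that case the regularity P_x is the singleton {p₀}. -/
open BoundedContinuousFunction Filter Topology

lemma emp_abs_le {X : Type*} [TopologicalSpace X] [DiscreteTopology X]
    {n : ℕ} (v : Fin n → X) (f : X →ᵇ ℝ) :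
    |emp v f| ≤ ‖f‖ := by
  rw [emp_apply, abs_mul, abs_inv, Nat.abs_cast]
  rcases Nat.eq_zero_or_pos n with h | h
  · simp [h, norm_nonneg]
  · calc ((n : ℝ))⁻¹ * |∑ i, f (v i)| ≤ (n : ℝ)⁻¹ * ∑ i : Fin n, ‖f‖ := by
          gcongr
          exact (Finset.abs_sum_le_sum_abs _ _).trans
            (Finset.sum_le_sum fun i _ => (f.norm_coe_le_norm (v i)))
      _ = ‖f‖ := by
          field_simp
          simp [Finset.sum_const, Finset.card_univ, nsmul_eq_mul]

theorem tendsto_iff_all_averages_converge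
    {X : Type*} [TopologicalSpace X] [DiscreteTopology X] [Nonempty X] (x : ℕ → X) :
    ((∃ p₀ ∈ PF X,
        Tendsto (fun n : ℕ => emp fun i : Fin (n + 1) => x i) atTop (𝓝 p₀)) ↔
      ∀ f : X →ᵇ ℝ, ∃ r : ℝ,
        Tendsto (fun n : ℕ => (emp fun i : Fin (n + 1) => x i) f) atTop (𝓝 r)) ∧
    ∀ p₀ : WeakDual ℝ (X →ᵇ ℝ),
      Tendsto (fun n : ℕ => emp fun i : Fin (n + 1) => x i) atTop (𝓝 p₀) →
      {p : WeakDual ℝ (X →ᵇ ℝ) |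
          MapClusterPt p atTop fun n : ℕ => emp fun i : Fin (n + 1) => x i} = {p₀} := by
  constructor
  · constructor
    · rintro ⟨p₀, -, hp⟩ f
      exact ⟨p₀ f, tendsto_iff_forall_eval_tendsto_topDualPairing.mp hp f⟩
    · intro h
      choose r hr using h
      have hadd : ∀ f g : X →ᵇ ℝ, r (f + g) = r f + r g := fun f g =>
        tendsto_nhds_unique (hr (f + g))
          (by simpa only [map_add] using (hr f).add (hr g))
      have hsmul : ∀ (c : ℝ) (f : X →ᵇ ℝ), r (c • f) = c * r f := fun c f =>
        tendsto_nhds_unique (hr (c • f))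
          (by simpa only [map_smul, smul_eq_mul] using (hr f).const_mul c)
      have hbound : ∀ f : X →ᵇ ℝ, |r f| ≤ ‖f‖ := fun f =>
        le_of_tendsto (hr f).abs (Eventually.of_forall fun n => emp_abs_le _ f)
      set L : (X →ᵇ ℝ) →ₗ[ℝ] ℝ :=
        { toFun := r
          map_add' := hadd
          map_smul' := hsmul }
      set P : WeakDual ℝ (X →ᵇ ℝ) :=
        (L.mkContinuous 1 (fun f => by
          rw [one_mul, Real.norm_eq_abs]; exact hbound f) : (X →ᵇ ℝ) →L[ℝ] ℝ)
      have hPf : ∀ f, P f = r f := fun f => rfl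
      have hemp_one : ∀ n : ℕ, (emp fun i : Fin (n + 1) => x i) (1 : X →ᵇ ℝ) = 1 := by
        intro n
        rw [emp_apply]
        simp only [BoundedContinuousFunction.coe_one, Pi.one_apply, Finset.sum_const,
          Finset.card_univ, Fintype.card_fin, nsmul_eq_mul, mul_one]
        rw [inv_mul_cancel₀ (by exact_mod_cast Nat.succ_ne_zero n)]
      refine ⟨P, ⟨fun f hf => ?_, ?_⟩, ?_⟩
      · rw [hPf]
        refine ge_of_tendsto (hr f) (Eventually.of_forall fun n => ?_)
        rw [emp_apply]
        exact mul_nonneg (by positivity) (Finset.sum_nonneg fun i _ => hf _)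
      · rw [hPf]
        exact tendsto_nhds_unique
          (by simpa only [hemp_one] using hr 1) tendsto_const_nhds
      · rw [tendsto_iff_forall_eval_tendsto_topDualPairing]
        intro f
        exact hr f
  · intro p₀ hp
    ext p
    simp only [Set.mem_setOf_eq, Set.mem_singleton_iff]
    constructor
    · intro hcl
      exact eq_of_nhds_neBot (ClusterPt.mono hcl hp)
    · rintro rfl
      exact hp.mapClusterPt
end
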